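/- Let μ be a finite measure on ℝ^M, let A be a real M×M matrix, B a real N×N matrix, C a real N×M matrix, f : ℝ^N × ℝ^M → ℝ^N, g : ℝ^M → ℝ^M, and write G(y) = A y + g(y). Let π, π^L : ℝ^M → ℝ^N be measurable with e = π^L − π and e ∘ G square-integrable with respect to μ, and define the residual r(y) = π^L(G(y)) − B π^L(y) − C y − f(π^L(y), y). Assume: (i) π satisfies the invariance equation π(G(y)) = B π(y) + C y + f(π(y), y) for μ-almost every y; (ii) there is L̄_f ≥ 0 such that for μ-almost every y the map x ↦ f(x, y) is Lipschitz on ℝ^N with constant L̄_f; (iii) there is L_G ≥ 0 with ∫ ‖e(G(y))‖² dμ(y) ≤ L_G² ∫ ‖e(y)‖² dμ(y). Then (∫ ‖r(y)‖² dμ(y))^{1/2} ≤ (L_G + ‖B‖ + L̄_f) · (∫ ‖e(y)‖² dμ(y))^{1/2}, where ‖B‖ is the operator norm of B induced by the Euclidean norm. -/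

import Mathlib

open MeasureTheory Matrix

/-! Subtracting the invariance equation of `π` from the residual of `πL` gives, almost
everywhere, `r = e ∘ G - B e - (f (πL ·, ·) - f (π ·, ·))`, hence
`‖r‖ ≤ ‖e ∘ G‖ + (‖B‖ + L̄_f) ‖e‖` pointwise. Minkowski's inequality in `L²` and the
bound on `e ∘ G` finish the proof. -/

section SqrtIntegralNormSq

variable {α E : Type*} [MeasurableSpace α] {μ : Measure α} [NormedAddCommGroup E]

theorem MeasureTheory.MemLp.sqrt_integral_norm_sq_eq_toReal_eLpNorm {f : α → E}
    (hf : MemLp f 2 μ) :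
    √(∫ y, ‖f y‖ ^ 2 ∂μ) = (eLpNorm f 2 μ).toReal := by
  rw [hf.eLpNorm_eq_integral_rpow_norm two_ne_zero ENNReal.ofNat_ne_top,
    ENNReal.toReal_ofReal (by positivity), Real.sqrt_eq_rpow]
  norm_num

theorem MeasureTheory.MemLp.sqrt_integral_norm_sq_add_le {f g : α → E}
    (hf : MemLp f 2 μ) (hg : MemLp g 2 μ) :
    √(∫ y, ‖f y + g y‖ ^ 2 ∂μ) ≤ √(∫ y, ‖f y‖ ^ 2 ∂μ) + √(∫ y, ‖g y‖ ^ 2 ∂μ) := by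
  rw [MemLp.sqrt_integral_norm_sq_eq_toReal_eLpNorm (f := fun y => f y + g y) (hf.add hg),
    hf.sqrt_integral_norm_sq_eq_toReal_eLpNorm, hg.sqrt_integral_norm_sq_eq_toReal_eLpNorm,
    ← ENNReal.toReal_add hf.eLpNorm_ne_top hg.eLpNorm_ne_top]
  exact ENNReal.toReal_mono (by finiteness)
    (eLpNorm_add_le hf.aestronglyMeasurable hg.aestronglyMeasurable one_le_two)

theorem sqrt_integral_norm_sq_const_mul (k : ℝ) (u : α → ℝ) :
    √(∫ y, ‖k * u y‖ ^ 2 ∂μ) = |k| * √(∫ y, ‖u y‖ ^ 2 ∂μ) := by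
  simp_rw [norm_mul, mul_pow, integral_const_mul, Real.sqrt_mul (sq_nonneg _),
    Real.sqrt_sq_eq_abs, Real.norm_eq_abs, abs_abs]

/-- When `‖r‖²` is not integrable, its Bochner integral takes the junk value `0`. -/
theorem sqrt_integral_norm_sq_le_of_ae_le {F : Type*} [NormedAddCommGroup F]
    {r : α → F} {h : α → E} (hh : MemLp h 2 μ) (hrh : ∀ᵐ y ∂μ, ‖r y‖ ≤ ‖h y‖) :
    √(∫ y, ‖r y‖ ^ 2 ∂μ) ≤ √(∫ y, ‖h y‖ ^ 2 ∂μ) := by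
  refine Real.sqrt_le_sqrt ?_
  by_cases hr : Integrable (fun y => ‖r y‖ ^ 2) μ
  · refine integral_mono_ae hr (hh.integrable_norm_pow two_ne_zero) ?_
    filter_upwards [hrh] with y hy
    gcongr
  · rw [integral_undef hr]
    positivity

end SqrtIntegralNormSq

theorem norm_invariance_residual_le {𝕜 E : Type*} [NontriviallyNormedField 𝕜]
    [SeminormedAddCommGroup E] [NormedSpace 𝕜 E] (B : E →L[𝕜] E) {x x' z z' c a b : E}
    {L : ℝ} (hz' : z' = B z + c + b) (hab : ‖a - b‖ ≤ L * ‖x - z‖) :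
    ‖x' - B x - c - a‖ ≤ ‖x' - z'‖ + (‖B‖ + L) * ‖x - z‖ := by
  have hsplit : x' - B x - c - a = (x' - z') - B (x - z) - (a - b) := by
    rw [hz', map_sub]; abel
  calc ‖x' - B x - c - a‖ ≤ ‖x' - z'‖ + ‖B (x - z)‖ + ‖a - b‖ := by
        rw [hsplit]; grw [norm_sub_le, norm_sub_le]
    _ ≤ ‖x' - z'‖ + ‖B‖ * ‖x - z‖ + L * ‖x - z‖ := by gcongr; exact B.le_opNorm _
    _ = ‖x' - z'‖ + (‖B‖ + L) * ‖x - z‖ := by ring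

theorem residual_L2_bound_general {M N : ℕ}
    (μ : Measure (EuclideanSpace ℝ (Fin M)))
    (B : Matrix (Fin N) (Fin N) ℝ)
    (C : Matrix (Fin N) (Fin M) ℝ)
    (f : EuclideanSpace ℝ (Fin N) × EuclideanSpace ℝ (Fin M) → EuclideanSpace ℝ (Fin N))
    (G : EuclideanSpace ℝ (Fin M) → EuclideanSpace ℝ (Fin M))
    (π πL : EuclideanSpace ℝ (Fin M) → EuclideanSpace ℝ (Fin N))
    (e : EuclideanSpace ℝ (Fin M) → EuclideanSpace ℝ (Fin N))
    (he : e = πL - π)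
    (heL2 : MemLp e 2 μ) (heGL2 : MemLp (fun y => e (G y)) 2 μ)
    (r : EuclideanSpace ℝ (Fin M) → EuclideanSpace ℝ (Fin N))
    (hr : r = fun y => πL (G y) - Matrix.toEuclideanCLM (𝕜 := ℝ) B (πL y)
      - Matrix.toEuclideanLin C y - f (πL y, y))
    (hinv : ∀ᵐ y ∂μ, π (G y) = Matrix.toEuclideanCLM (𝕜 := ℝ) B (π y)
      + Matrix.toEuclideanLin C y + f (π y, y))
    (Lf : ℝ) (hLf0 : 0 ≤ Lf)
    (hLip : ∀ᵐ y ∂μ, ∀ x₁ x₂ : EuclideanSpace ℝ (Fin N),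
      ‖f (x₁, y) - f (x₂, y)‖ ≤ Lf * ‖x₁ - x₂‖)
    (LG : ℝ) (hLG0 : 0 ≤ LG)
    (hcomp : ∫ y, ‖e (G y)‖ ^ 2 ∂μ ≤ LG ^ 2 * ∫ y, ‖e y‖ ^ 2 ∂μ) :
    Real.sqrt (∫ y, ‖r y‖ ^ 2 ∂μ) ≤
      (LG + ‖Matrix.toEuclideanCLM (𝕜 := ℝ) B‖ + Lf) * Real.sqrt (∫ y, ‖e y‖ ^ 2 ∂μ) := by
  set k := ‖Matrix.toEuclideanCLM (𝕜 := ℝ) B‖ + Lf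
  have hk : 0 ≤ k := by positivity
  have hbound : ∀ᵐ y ∂μ, ‖r y‖ ≤ ‖‖e (G y)‖ + k * ‖e y‖‖ := by
    filter_upwards [hinv, hLip] with y hinv_y hLip_y
    rw [hr, he, Real.norm_of_nonneg (by positivity)]
    exact norm_invariance_residual_le _ hinv_y (hLip_y _ _)
  calc √(∫ y, ‖r y‖ ^ 2 ∂μ)
      ≤ √(∫ y, ‖‖e (G y)‖ + k * ‖e y‖‖ ^ 2 ∂μ) :=
        sqrt_integral_norm_sq_le_of_ae_le (heGL2.norm.add (heL2.norm.const_mul k)) hbound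
    _ ≤ √(∫ y, ‖‖e (G y)‖‖ ^ 2 ∂μ) + √(∫ y, ‖k * ‖e y‖‖ ^ 2 ∂μ) :=
        heGL2.norm.sqrt_integral_norm_sq_add_le (heL2.norm.const_mul k)
    _ = √(∫ y, ‖e (G y)‖ ^ 2 ∂μ) + k * √(∫ y, ‖e y‖ ^ 2 ∂μ) := by
        simp only [sqrt_integral_norm_sq_const_mul, norm_norm, abs_of_nonneg hk]
    _ ≤ LG * √(∫ y, ‖e y‖ ^ 2 ∂μ) + k * √(∫ y, ‖e y‖ ^ 2 ∂μ) := by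
        grw [hcomp, Real.sqrt_mul' _ (integral_nonneg fun y => by positivity),
          Real.sqrt_sq hLG0]
    _ = (LG + k) * √(∫ y, ‖e y‖ ^ 2 ∂μ) := by ring
    _ = (LG + ‖Matrix.toEuclideanCLM (𝕜 := ℝ) B‖ + Lf) * √(∫ y, ‖e y‖ ^ 2 ∂μ) := by
        rw [add_assoc]

/-- `L²(μ)` bound on the residual of the invariance equation in terms of the
approximation error `e = π^L − π`:
`‖r‖_{L²} ≤ (L_G + ‖B‖ + L̄_f) ‖e‖_{L²}`. -/
theorem residual_L2_bound {M N : ℕ}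
    (μ : Measure (EuclideanSpace ℝ (Fin M))) [IsFiniteMeasure μ]
    (A : Matrix (Fin M) (Fin M) ℝ) (B : Matrix (Fin N) (Fin N) ℝ)
    (C : Matrix (Fin N) (Fin M) ℝ)
    (f : EuclideanSpace ℝ (Fin N) × EuclideanSpace ℝ (Fin M) → EuclideanSpace ℝ (Fin N))
    (g : EuclideanSpace ℝ (Fin M) → EuclideanSpace ℝ (Fin M))
    (G : EuclideanSpace ℝ (Fin M) → EuclideanSpace ℝ (Fin M))
    (hG : G = fun y => Matrix.toEuclideanCLM (𝕜 := ℝ) A y + g y)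
    (π πL : EuclideanSpace ℝ (Fin M) → EuclideanSpace ℝ (Fin N))
    (hπm : Measurable π) (hπLm : Measurable πL)
    (e : EuclideanSpace ℝ (Fin M) → EuclideanSpace ℝ (Fin N))
    (he : e = πL - π)
    (heL2 : MemLp e 2 μ) (heGL2 : MemLp (fun y => e (G y)) 2 μ)
    (r : EuclideanSpace ℝ (Fin M) → EuclideanSpace ℝ (Fin N))
    (hr : r = fun y => πL (G y) - Matrix.toEuclideanCLM (𝕜 := ℝ) B (πL y)
      - Matrix.toEuclideanLin C y - f (πL y, y))
    (hinv : ∀ᵐ y ∂μ, π (G y) = Matrix.toEuclideanCLM (𝕜 := ℝ) B (π y)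
      + Matrix.toEuclideanLin C y + f (π y, y))
    (Lf : ℝ) (hLf0 : 0 ≤ Lf)
    (hLip : ∀ᵐ y ∂μ, ∀ x₁ x₂ : EuclideanSpace ℝ (Fin N),
      ‖f (x₁, y) - f (x₂, y)‖ ≤ Lf * ‖x₁ - x₂‖)
    (LG : ℝ) (hLG0 : 0 ≤ LG)
    (hcomp : ∫ y, ‖e (G y)‖ ^ 2 ∂μ ≤ LG ^ 2 * ∫ y, ‖e y‖ ^ 2 ∂μ) :
    Real.sqrt (∫ y, ‖r y‖ ^ 2 ∂μ) ≤
      (LG + ‖Matrix.toEuclideanCLM (𝕜 := ℝ) B‖ + Lf) * Real.sqrt (∫ y, ‖e y‖ ^ 2 ∂μ) :=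
  residual_L2_bound_general μ B C f G π πL e he heL2 heGL2 r hr hinv Lf hLf0 hLip LG hLG0 hcomp
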